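/- arXiv:2605.29175 — 4 statements merged into one kernel-verified Lean document; each statement's English description precedes it below -/
import Mathlib

section
/- Let $(X,\mathcal{A},\mu)$ be a measure space with $\mu(X)<\infty$ and let $\alpha>1$. Then there exists a constant $C>0$, depending only on $\alpha$ and $\mu(X)$, such that the following holds: for every $\mu$-integrable function $f:X\to\mathbb{R}$ and every $\beta>0$, if for all $k>0$ one has $\int_X (|f|-k)^+\,d\mu \le \beta\,\mu(\{x : |f(x)|>k\})^{\alpha}$, then $f\in L^{\infty}(\mu)$ and $\|f\|_{L^\infty(\mu)}\le C\beta$. -/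
/-! Put `φ(t) = μ{|f| > t}`. Chebyshev's inequality applied to `(|f| - k)⁺` turns the
hypothesis into `(h - k) φ(h) ≤ β φ(k)^α` for `0 < k < h`. Along the levels
`k_j = δ - δ/2^{j+1}` the gaps halve while the exponent `α > 1` makes `φ(k_j)` decay
geometrically once `δ` is a large enough multiple of `β`, so `φ(δ) = 0`, i.e. `|f| ≤ δ`
almost everywhere. -/

open MeasureTheory ENNReal
open Filter Topology

lemma rpow_pow_of_rpow_sub_one_eq_half {α r : ℝ} (hα : α ≠ 0) (hr : 0 ≤ r)
    (hrα : r ^ (α - 1) = 2⁻¹) (j : ℕ) : (r ^ j) ^ α = r ^ j / 2 ^ j := by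
  calc (r ^ j) ^ α = (r ^ j) ^ ((α - 1) + 1) := by rw [sub_add_cancel]
    _ = (r ^ (α - 1)) ^ j * r ^ j := by
      rw [Real.rpow_add' (pow_nonneg hr j) (by simpa using hα), Real.rpow_one,
        ← Real.rpow_pow_comm hr]
    _ = r ^ j / 2 ^ j := by rw [hrα, inv_pow, inv_mul_eq_div]

section Iteration

variable {φ : ℝ → ℝ} {α β δ M : ℝ}

lemma le_mul_pow_of_sub_mul_le_rpow (hα : 1 < α) (hβ : 0 ≤ β)
    (hφ0 : ∀ t, 0 ≤ φ t) (hφM : ∀ t, φ t ≤ M)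
    (hstep : ∀ k h, 0 < k → k < h → (h - k) * φ h ≤ β * φ k ^ α)
    {r : ℝ} (hr : 0 ≤ r) (hrα : r ^ (α - 1) = 2⁻¹) (hδ : 0 < δ)
    (hδM : 4 * β * M ^ (α - 1) ≤ r * δ) (j : ℕ) :
    φ (δ - δ / 2 ^ (j + 1)) ≤ M * r ^ j := by
  have hM : 0 ≤ M := (hφ0 0).trans (hφM 0)
  induction j with
  | zero => simpa using hφM _
  | succ j ih =>
    set k := δ - δ / 2 ^ (j + 1)
    set h := δ - δ / 2 ^ (j + 2)
    have hgap : h - k = δ / 2 ^ (j + 2) := by simp only [k, h, pow_succ]; ring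
    have hgap0 : 0 < δ / 2 ^ (j + 2) := by positivity
    have hk : 0 < k :=
      sub_pos.2 (div_lt_self hδ (one_lt_pow₀ (by norm_num) (Nat.succ_ne_zero j)))
    have hMα : M ^ α = M ^ (α - 1) * M := by
      rw [← Real.rpow_add_one' hM (by linarith), sub_add_cancel]
    show φ h ≤ M * r ^ (j + 1)
    refine le_of_mul_le_mul_left ?_ hgap0
    calc δ / 2 ^ (j + 2) * φ h ≤ β * φ k ^ α := hgap ▸ hstep k h hk (by linarith)
      _ ≤ β * (M * r ^ j) ^ α := by gcongr; exact hφ0 _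
      _ = 4 * β * M ^ (α - 1) * (M * r ^ j / 2 ^ (j + 2)) := by
          rw [Real.mul_rpow hM (pow_nonneg hr j),
            rpow_pow_of_rpow_sub_one_eq_half (by linarith) hr hrα, hMα]
          field_simp; ring
      _ ≤ r * δ * (M * r ^ j / 2 ^ (j + 2)) := by gcongr
      _ = δ / 2 ^ (j + 2) * (M * r ^ (j + 1)) := by ring

lemma eq_zero_of_sub_mul_le_rpow (hα : 1 < α) (hβ : 0 ≤ β) (hφ0 : ∀ t, 0 ≤ φ t)
    (hφM : ∀ t, φ t ≤ M) (hφ : Antitone φ)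
    (hstep : ∀ k h, 0 < k → k < h → (h - k) * φ h ≤ β * φ k ^ α) (hδ : 0 < δ)
    (hδM : 4 * 2 ^ (α - 1)⁻¹ * M ^ (α - 1) * β ≤ δ) : φ δ = 0 := by
  set r : ℝ := (2 ^ (α - 1)⁻¹)⁻¹
  have hr0 : 0 < r := by positivity
  have hr1 : r < 1 := inv_lt_one_of_one_lt₀ (Real.one_lt_rpow (by norm_num) (by simpa using hα))
  have hrα : r ^ (α - 1) = 2⁻¹ := by
    rw [Real.inv_rpow (by positivity), Real.rpow_inv_rpow zero_le_two (by linarith)]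
  have hrδ : 4 * β * M ^ (α - 1) ≤ r * δ := by
    rw [inv_mul_eq_div, le_div_iff₀ (by positivity)]; linarith
  have hdecay : Tendsto (fun j : ℕ => M * r ^ j) atTop (𝓝 0) := by
    simpa using (tendsto_pow_atTop_nhds_zero_of_lt_one hr0.le hr1).const_mul M
  refine le_antisymm (ge_of_tendsto' hdecay fun j => ?_) (hφ0 δ)
  calc φ δ ≤ φ (δ - δ / 2 ^ (j + 1)) :=
        hφ (sub_le_self _ (by positivity))
    _ ≤ M * r ^ j := le_mul_pow_of_sub_mul_le_rpow hα hβ hφ0 hφM hstep hr0.le hrα hδ hrδ j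

end Iteration

lemma sub_mul_measureReal_lt_abs_le_integral {X : Type*} [MeasurableSpace X] {μ : Measure X}
    [IsFiniteMeasure μ] {f : X → ℝ} (hf : Integrable f μ) {k h : ℝ} (hk : 0 ≤ k)
    (hkh : k ≤ h) : (h - k) * μ.real {x | h < |f x|} ≤ ∫ x, max (|f x| - k) 0 ∂μ := by
  have hg : Integrable (fun x => max (|f x| - k) 0) μ := by
    refine hf.abs.mono ?_ (ae_of_all _ fun x => ?_)
    · exact ((hf.aemeasurable.abs.sub_const k).max aemeasurable_const).aestronglyMeasurable
    · rw [Real.norm_eq_abs, Real.norm_eq_abs, abs_of_nonneg (le_max_right _ _), abs_abs]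
      exact max_le (by linarith) (abs_nonneg _)
  have hsub : {x | h < |f x|} ⊆ {x | h - k ≤ max (|f x| - k) 0} := fun x (hx : h < |f x|) =>
    le_max_of_le_left (show h - k ≤ |f x| - k by linarith)
  calc (h - k) * μ.real {x | h < |f x|}
      ≤ (h - k) * μ.real {x | h - k ≤ max (|f x| - k) 0} :=
        mul_le_mul_of_nonneg_left (measureReal_mono hsub) (sub_nonneg.2 hkh)
    _ ≤ ∫ x, max (|f x| - k) 0 ∂μ :=
        mul_meas_ge_le_integral_of_nonneg (ae_of_all _ fun _ => le_max_right _ _) hg _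

/-- Stampacchia-type boundedness lemma: if the tails `∫ (|f|-k)⁺` are controlled by
`β · μ{|f|>k}^α` with `α > 1`, then `f ∈ L^∞` with `‖f‖_∞ ≤ C β`, where `C` depends
only on `α` and the total mass `μ(X)`. -/
theorem stmt0 (α : ℝ) (hα : 1 < α) (m : ℝ≥0∞) (hm : m < ⊤) :
    ∃ C : ℝ, 0 < C ∧
      ∀ (X : Type) (_ : MeasurableSpace X) (μ : Measure X), μ Set.univ = m →
        ∀ f : X → ℝ, Integrable f μ →
          ∀ β : ℝ, 0 < β →
            (∀ k : ℝ, 0 < k →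
              (∫ x, max (|f x| - k) 0 ∂μ) ≤ β * (μ {x | k < |f x|}).toReal ^ α) →
            MemLp f ⊤ μ ∧ eLpNorm f ⊤ μ ≤ ENNReal.ofReal (C * β) := by
  refine ⟨4 * 2 ^ (α - 1)⁻¹ * (m.toReal ^ (α - 1) + 1), by positivity, ?_⟩
  intro X _ μ hμ f hf β hβ htail
  have : IsFiniteMeasure μ := ⟨hμ ▸ hm⟩
  set δ := 4 * 2 ^ (α - 1)⁻¹ * (m.toReal ^ (α - 1) + 1) * β with hδ
  have hnull : μ.real {x | δ < |f x|} = 0 := by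
    refine eq_zero_of_sub_mul_le_rpow (φ := fun t => μ.real {x | t < |f x|}) (M := m.toReal)
      hα hβ.le (fun _ => measureReal_nonneg) (fun _ => ?_) (fun s t hst => ?_)
      (fun k h hk hkh => ?_) (by positivity) (by rw [hδ]; gcongr; linarith)
    · rw [← hμ]; exact measureReal_mono (Set.subset_univ _)
    · exact measureReal_mono fun x (hx : t < |f x|) => hst.trans_lt hx
    · exact (sub_mul_measureReal_lt_abs_le_integral hf hk.le hkh.le).trans (htail k hk)
  have hbound : ∀ᵐ x ∂μ, ‖f x‖ ≤ δ := by
    rw [ae_iff]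
    simpa [Real.norm_eq_abs, not_le] using (measureReal_eq_zero_iff).1 hnull
  exact ⟨memLp_top_of_bound hf.1 δ hbound,
    by simpa using eLpNorm_le_of_ae_bound (p := ⊤) hbound⟩
end

section
/- Let $N\ge 2$ be an integer. For $1<p<N$ let $S_{N,p}=\pi^{-1/2}N^{-1/p}\left(\frac{p-1}{N-p}\right)^{1-1/p}\left(\frac{\Gamma(1+N/2)\,\Gamma(N)}{\Gamma(N/p)\,\Gamma(1+N-N/p)}\right)^{1/N}$. Then $\lim_{p\to 1^+} S_{N,p}^{\,1/(p-1)} = 0$. In particular there exists $p_0>1$ such that $S_{N,p}<1$ and $S_{N,p}^{\,1/(p-1)}<1$ for all $1<p<p_0$. -/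
/-!
As `p → 1⁺`, every factor of `S_{N,p}` converges; the only delicate one is
`((p - 1)/(N - p))^{1 - 1/p}`, which behaves like `t^t` with `t → 0⁺` and so tends to `1`.
Hence `S_{N,p} → S_{N,1} = π^{-1/2} N^{-1} Γ(1 + N/2)^{1/N}`, and `S_{N,1} < 1` because
`Γ(1 + N/2) < N! ≤ N^N`. Fixing `c` with `S_{N,1} < c < 1`, eventually
`S_{N,p}^{1/(p-1)} ≤ c^{1/(p-1)} → 0`.
-/

open Real Filter Set Topology

theorem tendsto_rpow_of_tendsto_lt_one {α : Type*} {l : Filter α} {f g : α → ℝ} {L : ℝ}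
    (hf : Tendsto f l (𝓝 L)) (hL : L < 1) (hf₀ : ∀ᶠ x in l, 0 ≤ f x)
    (hg : Tendsto g l atTop) : Tendsto (fun x => f x ^ g x) l (𝓝 0) := by
  obtain ⟨c, hc, hc₁⟩ := exists_between (max_lt hL one_pos)
  have hLc : L < c := (le_max_left _ _).trans_lt hc
  have hc₀ : 0 < c := (le_max_right _ _).trans_lt hc
  refine squeeze_zero' (hf₀.mono fun x hx => rpow_nonneg hx _) ?_
    ((tendsto_rpow_atTop_of_base_lt_one c (by linarith) hc₁).comp hg)
  filter_upwards [hf₀, hf.eventually_lt_const hLc, hg.eventually_ge_atTop 0] with x hx hxc hgx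
  exact rpow_le_rpow hx hxc.le hgx

theorem tendsto_rpow_self_nhdsGT_zero : Tendsto (fun x : ℝ => x ^ x) (𝓝[>] 0) (𝓝 1) := by
  have h := ((continuous_exp.comp continuous_mul_log).tendsto 0).mono_left
    (nhdsWithin_le_nhds (s := Ioi 0))
  simp only [Function.comp_def, zero_mul, exp_zero] at h
  exact h.congr' (eventually_nhdsWithin_of_forall fun x (hx : 0 < x) => by
    beta_reduce
    rw [rpow_def_of_pos hx, mul_comm])

theorem tendsto_sub_one_div_sub_rpow_nhdsGT_one {b : ℝ} (hb : 1 < b) :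
    Tendsto (fun p => ((p - 1) / (b - p)) ^ (1 - 1 / p)) (𝓝[>] 1) (𝓝 1) := by
  have ht : Tendsto (fun p => (p - 1) / (b - p)) (𝓝[>] 1) (𝓝[>] 0) := by
    refine tendsto_nhdsWithin_iff.2 ⟨?_, ?_⟩
    · have : ContinuousAt (fun p => (p - 1) / (b - p)) 1 :=
        ContinuousAt.div (by fun_prop) (by fun_prop) (by linarith)
      simpa using this.tendsto.mono_left nhdsWithin_le_nhds
    · filter_upwards [Ioo_mem_nhdsGT hb] with p hp
      exact mem_Ioi.2 <| div_pos (by linarith [hp.1]) (by linarith [hp.2])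
  have hc : Tendsto (fun p => (b - p) / p) (𝓝[>] 1) (𝓝 (b - 1)) := by
    have : ContinuousAt (fun p => (b - p) / p) 1 :=
      ContinuousAt.div (by fun_prop) (by fun_prop) one_ne_zero
    simpa using this.tendsto.mono_left nhdsWithin_le_nhds
  have h := (tendsto_rpow_self_nhdsGT_zero.comp ht).rpow hc (Or.inl one_ne_zero)
  rw [one_rpow] at h
  refine h.congr' ?_
  filter_upwards [Ioo_mem_nhdsGT hb] with p hp
  have hp₀ : 0 < p := by linarith [hp.1]
  have hbp : 0 < b - p := by linarith [hp.2]
  -- with `t = (p - 1) / (b - p)`, the exponent `1 - 1 / p` is `t * ((b - p) / p)`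
  rw [Function.comp_apply, ← rpow_mul (div_pos (by linarith [hp.1]) hbp).le]
  congr 1
  field_simp

noncomputable def talentiConst (n p : ℝ) : ℝ :=
  π ^ (-(1:ℝ)/2) * n ^ (-(1/p)) * ((p - 1) / (n - p)) ^ (1 - 1/p) *
    ((Gamma (1 + n/2) * Gamma n / (Gamma (n/p) * Gamma (1 + n - n/p))) ^ ((1:ℝ)/n))

theorem talentiConst_pos {n p : ℝ} (hp : 1 < p) (hpn : p < n) : 0 < talentiConst n p := by
  have hn : 0 < n := by linarith
  have hp₀ : 0 < p := by linarith
  have hnp : n / p < n := div_lt_self hn hp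
  have hΓ : 0 < Gamma (1 + n/2) * Gamma n / (Gamma (n/p) * Gamma (1 + n - n/p)) := by
    have := Gamma_pos_of_pos (div_pos hn hp₀)
    have := Gamma_pos_of_pos (show 0 < 1 + n - n/p by linarith)
    have := Gamma_pos_of_pos (show 0 < 1 + n/2 by positivity)
    have := Gamma_pos_of_pos hn
    positivity
  have : 0 < (p - 1) / (n - p) := div_pos (by linarith) (by linarith)
  unfold talentiConst
  positivity

noncomputable def talentiConstOne (n : ℝ) : ℝ :=
  π ^ (-(1:ℝ)/2) * n⁻¹ * Gamma (1 + n/2) ^ (1/n)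

theorem continuousAt_Gamma_of_pos {x : ℝ} (hx : 0 < x) : ContinuousAt Gamma x :=
  differentiableOn_Gamma_Ioi.continuousOn.continuousAt (Ioi_mem_nhds hx)

theorem tendsto_talentiConst {n : ℝ} (hn : 1 < n) :
    Tendsto (talentiConst n) (𝓝[>] 1) (𝓝 (talentiConstOne n)) := by
  have hn₀ : 0 < n := by linarith
  have hpow : ContinuousAt (fun p : ℝ => n ^ (-(1/p))) 1 :=
    (continuousAt_const_rpow hn₀.ne').comp (by fun_prop (disch := norm_num))
  have hGamma : ContinuousAt
      (fun p : ℝ => (Gamma (1 + n/2) * Gamma n / (Gamma (n/p) * Gamma (1 + n - n/p))) ^ (1/n))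
      1 := by
    have h₁ : ContinuousAt (fun p => Gamma (n/p)) 1 :=
      (continuousAt_Gamma_of_pos (x := n/1) (by simpa using hn₀)).comp
        (by fun_prop (disch := norm_num))
    have h₂ : ContinuousAt (fun p => Gamma (1 + n - n/p)) 1 :=
      ContinuousAt.comp (f := fun p : ℝ => 1 + n - n/p) (continuousAt_Gamma_of_pos (by simp))
        (by fun_prop (disch := norm_num))
    refine (continuousAt_const.div (h₁.mul h₂) ?_).rpow_const (Or.inr (by positivity))
    simp [(Gamma_pos_of_pos hn₀).ne']
  have h := (((tendsto_const_nhds (x := π ^ (-(1:ℝ)/2))).mul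
    (hpow.tendsto.mono_left nhdsWithin_le_nhds)).mul
    (tendsto_sub_one_div_sub_rpow_nhdsGT_one hn)).mul (hGamma.tendsto.mono_left nhdsWithin_le_nhds)
  have hval : π ^ (-(1:ℝ)/2) * n ^ (-(1/1 : ℝ)) * 1 *
      (Gamma (1 + n/2) * Gamma n / (Gamma (n/1) * Gamma (1 + n - n/1))) ^ (1/n) =
      talentiConstOne n := by
    simp [talentiConstOne, rpow_neg_one, (Gamma_pos_of_pos hn₀).ne']
  rw [← hval]
  exact h

theorem Gamma_one_add_half_rpow_one_div_lt_self {N : ℕ} (hN : 2 ≤ N) :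
    Gamma (1 + N/2) ^ (1/(N:ℝ)) < N := by
  have hN₂ : (2:ℝ) ≤ N := by exact_mod_cast hN
  have hN₀ : (0:ℝ) < N := by linarith
  have hlt : Gamma (1 + N/2) < (N:ℝ) ^ N :=
    calc Gamma (1 + N/2) < Gamma (N + 1) :=
          Gamma_strictMonoOn_Ici (by rw [mem_Ici]; linarith) (by rw [mem_Ici]; linarith)
            (by linarith)
      _ = N.factorial := by exact_mod_cast Gamma_nat_eq_factorial N
      _ ≤ (N:ℝ) ^ N := by exact_mod_cast N.factorial_le_pow
  calc Gamma (1 + N/2) ^ (1/(N:ℝ)) < ((N:ℝ) ^ N) ^ (1/(N:ℝ)) :=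
        rpow_lt_rpow (Gamma_pos_of_pos (by positivity)).le hlt (by positivity)
    _ = N := by rw [← rpow_natCast, ← rpow_mul hN₀.le, mul_one_div_cancel hN₀.ne', rpow_one]

theorem talentiConstOne_lt_one {N : ℕ} (hN : 2 ≤ N) : talentiConstOne N < 1 := by
  have hN₀ : (0:ℝ) < N := by positivity
  have hπ : π ^ (-(1:ℝ)/2) ≤ 1 :=
    rpow_le_one_of_one_le_of_nonpos (by linarith [pi_gt_three]) (by norm_num)
  have hΓ : (N:ℝ)⁻¹ * Gamma (1 + N/2) ^ (1/(N:ℝ)) < 1 := by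
    rw [inv_mul_lt_iff₀ hN₀, mul_one]; exact Gamma_one_add_half_rpow_one_div_lt_self hN
  rw [talentiConstOne, mul_assoc]
  calc _ ≤ 1 * ((N:ℝ)⁻¹ * Gamma (1 + N/2) ^ (1/(N:ℝ))) := by gcongr
    _ < 1 := by rwa [one_mul]

/-- With `S_{N,p}` Talenti's best Sobolev constant, `S_{N,p}^{1/(p-1)} → 0` as `p → 1⁺`;
in particular, for some `p₀ > 1`, both `S_{N,p} < 1` and `S_{N,p}^{1/(p-1)} < 1`
hold for all `1 < p < p₀`. -/
theorem stmt5 (N : ℕ) (hN : 2 ≤ N)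
    (S : ℝ → ℝ)
    (hS : ∀ p : ℝ, 1 < p → p < N →
      S p = π ^ (-(1:ℝ)/2) * (N : ℝ) ^ (-(1/p)) * ((p - 1) / ((N : ℝ) - p)) ^ (1 - 1/p) *
          ((Real.Gamma (1 + N/2) * Real.Gamma N /
              (Real.Gamma (N/p) * Real.Gamma (1 + N - N/p))) ^ ((1:ℝ)/N))) :
    Tendsto (fun p : ℝ => S p ^ (1 / (p - 1))) (nhdsWithin 1 (Ioi 1)) (nhds 0) ∧
    ∃ p₀ : ℝ, 1 < p₀ ∧ ∀ p : ℝ, 1 < p → p < p₀ → S p < 1 ∧ S p ^ (1 / (p - 1)) < 1 := by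
  have hN₁ : (1:ℝ) < N := by exact_mod_cast hN
  have hSeq : ∀ᶠ p in 𝓝[>] 1, talentiConst N p = S p := by
    filter_upwards [Ioo_mem_nhdsGT hN₁] with p hp using (hS p hp.1 hp.2).symm
  have hS₀ : ∀ᶠ p in 𝓝[>] 1, 0 ≤ S p := by
    filter_upwards [hSeq, Ioo_mem_nhdsGT hN₁] with p hp hp' using
      hp ▸ (talentiConst_pos hp'.1 hp'.2).le
  have hlim := (tendsto_talentiConst hN₁).congr' hSeq
  have hexp : Tendsto (fun p : ℝ => 1 / (p - 1)) (𝓝[>] 1) atTop := by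
    have h : Tendsto (fun p : ℝ => p - 1) (𝓝[>] 1) (𝓝[>] 0) := by
      have := (map_subRight_nhdsGT (c := (1:ℝ)) (a := 1)).le
      rwa [sub_self] at this
    exact h.inv_tendsto_nhdsGT_zero.congr fun p => by simp
  have hpow := tendsto_rpow_of_tendsto_lt_one hlim (talentiConstOne_lt_one hN) hS₀ hexp
  obtain ⟨p₀, hp₀, hsub⟩ := mem_nhdsGT_iff_exists_Ioo_subset.1
    ((hlim.eventually_lt_const (talentiConstOne_lt_one hN)).and (hpow.eventually_lt_const one_pos))
  exact ⟨hpow, p₀, hp₀, fun p hp hpp₀ => hsub ⟨hp, hpp₀⟩⟩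
end

section
/- Let $N\ge 1$ be an integer and $\lambda>N$ a real number. Let $x\in\mathbb{R}^N$ with $N/\lambda<|x|<1$, and define near $x$ the functions $u(y)=1-|y|^{-(N-1)}e^{\lambda(|y|-1)}$ and $z(y)=-y/|y|$. Then $u$ and $z$ are continuously differentiable near $x$, and: (i) $\mathrm{div}\,z(x)=-(N-1)/|x|$; (ii) $\nabla u(x)=-\left(\lambda-\frac{N-1}{|x|}\right)(1-u(x))\,\frac{x}{|x|}$; (iii) $|\nabla u(x)|=\left(\lambda-\frac{N-1}{|x|}\right)(1-u(x))>0$ and $\nabla u(x)=|\nabla u(x)|\,z(x)$; (iv) $-\mathrm{div}\,z(x)+\frac{|\nabla u(x)|}{1-u(x)}=\lambda$. -/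
/-!
Both `u` and `z` are radial. A radial function `f ‖y‖` has gradient `f' ‖x‖ • x / ‖x‖`, and
the field `y / ‖y‖` has derivative `(I - x ⊗ x / ‖x‖²) / ‖x‖` at `x`, whose trace is
`(N - 1) / ‖x‖`. The profile `g r = r ^ (-(N - 1)) * exp (λ (r - 1)) = 1 - u` satisfies
`g' = (λ - (N - 1) / r) g`, which is positive for `r > (N - 1) / λ`, in particular for
`r > N / λ`. Hence `∇u = -g' ‖x‖ • x / ‖x‖` is a positive multiple of `z x`, and
`|∇u| / (1 - u) = λ - (N - 1) / ‖x‖ = λ + div z`.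
-/

open Real

section InnerProductSpace

variable {E : Type*} [NormedAddCommGroup E] [InnerProductSpace ℝ E] {x : E}

theorem hasFDerivAt_norm_of_ne_zero (hx : x ≠ 0) :
    HasFDerivAt (fun y : E => ‖y‖) (‖x‖⁻¹ • innerSL ℝ x) x := by
  have hsqrt := (hasDerivAt_sqrt (pow_pos (norm_pos_iff.2 hx) 2).ne').comp_hasFDerivAt x
    (hasStrictFDerivAt_norm_sq x).hasFDerivAt
  simp only [Function.comp_def, sqrt_sq (norm_nonneg _)] at hsqrt
  refine hsqrt.congr_fderiv ?_
  ext v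
  simp only [smul_apply, coe_innerSL_apply, nsmul_eq_mul, Nat.cast_ofNat, smul_eq_mul]
  field_simp

theorem HasDerivAt.hasGradientAt_comp_norm [CompleteSpace E] {f : ℝ → ℝ} {f' : ℝ}
    (hf : HasDerivAt f f' ‖x‖) (hx : x ≠ 0) :
    HasGradientAt (fun y => f ‖y‖) ((f' * ‖x‖⁻¹) • x) x := by
  rw [hasGradientAt_iff_hasFDerivAt]
  refine (hf.comp_hasFDerivAt x (hasFDerivAt_norm_of_ne_zero hx)).congr_fderiv ?_
  ext v
  simp [mul_assoc]

theorem hasFDerivAt_inv_norm_smul (hx : x ≠ 0) :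
    HasFDerivAt (fun y : E => ‖y‖⁻¹ • y)
      (‖x‖⁻¹ • ContinuousLinearMap.id ℝ E - (‖x‖ ^ 3)⁻¹ • (innerSL ℝ x).smulRight x) x := by
  have hinv := (hasDerivAt_inv (norm_pos_iff.2 hx).ne').comp_hasFDerivAt x
    (hasFDerivAt_norm_of_ne_zero hx)
  refine (hinv.smul (hasFDerivAt_id x)).congr_fderiv ?_
  ext v
  simp only [Function.comp_apply, smul_smul, neg_mul, neg_smul, id_eq, add_apply, smul_apply,
    ContinuousLinearMap.id_apply, ContinuousLinearMap.smulRight_apply, neg_apply,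
    coe_innerSL_apply, smul_eq_mul, sub_eq_add_neg, add_right_inj, neg_inj]
  congr 1
  ring

end InnerProductSpace

section Euclidean

variable {n : ℕ}

noncomputable def divergence (F : EuclideanSpace ℝ (Fin n) → EuclideanSpace ℝ (Fin n))
    (x : EuclideanSpace ℝ (Fin n)) : ℝ :=
  ∑ i, fderiv ℝ (fun y => F y i) x (EuclideanSpace.single i 1)

theorem HasFDerivAt.divergence_eq {F : EuclideanSpace ℝ (Fin n) → EuclideanSpace ℝ (Fin n)}
    {D : EuclideanSpace ℝ (Fin n) →L[ℝ] EuclideanSpace ℝ (Fin n)} {x : EuclideanSpace ℝ (Fin n)}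
    (hF : HasFDerivAt F D x) :
    divergence F x = ∑ i, D (EuclideanSpace.single i 1) i := by
  refine Finset.sum_congr rfl fun i _ => ?_
  have hFi : HasFDerivAt (fun y => F y i) ((EuclideanSpace.proj (𝕜 := ℝ) i).comp D) x :=
    (EuclideanSpace.proj (𝕜 := ℝ) i).hasFDerivAt.comp x hF
  rw [hFi.fderiv]
  rfl

theorem divergence_neg_inv_norm_smul {x : EuclideanSpace ℝ (Fin n)} (hx : x ≠ 0) :
    divergence (fun y => -(‖y‖⁻¹ • y)) x = -((n - 1) / ‖x‖) := by
  have hD : HasFDerivAt (fun y : EuclideanSpace ℝ (Fin n) => -(‖y‖⁻¹ • y)) _ x :=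
    (hasFDerivAt_inv_norm_smul hx).neg
  rw [hD.divergence_eq]
  have hsum : ∑ i, x i * x i = ‖x‖ ^ 2 := by
    simp [EuclideanSpace.norm_sq_eq, ← sq]
  simp only [neg_sub, sub_apply, smul_apply, ContinuousLinearMap.smulRight_apply,
    coe_innerSL_apply, EuclideanSpace.inner_single_right, ringHom_apply, one_mul,
    ContinuousLinearMap.id_apply, PiLp.sub_apply, PiLp.smul_apply, smul_eq_mul,
    PiLp.single_eq_same, mul_one, Finset.sum_sub_distrib, ← Finset.mul_sum, hsum,
    Finset.sum_const, Finset.card_univ, Fintype.card_fin, nsmul_eq_mul]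
  field_simp
  ring

end Euclidean

theorem hasDerivAt_rpow_neg_mul_exp {a lam r : ℝ} (hr : r ≠ 0) :
    HasDerivAt (fun t => t ^ (-a) * exp (lam * (t - 1)))
      ((lam - a / r) * (r ^ (-a) * exp (lam * (r - 1)))) r := by
  have hlin : HasDerivAt (fun t => lam * (t - 1)) lam r := by
    simpa using ((hasDerivAt_id r).sub_const 1).const_mul lam
  refine ((hasDerivAt_rpow_const (Or.inl hr)).mul hlin.exp).congr_deriv ?_
  rw [rpow_sub_one hr]
  field_simp
  ring

theorem stmt11_general (N : ℕ) (lam : ℝ) (hlam : (N : ℝ) < lam)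
    (x : EuclideanSpace ℝ (Fin N)) (hx1 : (N : ℝ) / lam < ‖x‖) :
    let u : EuclideanSpace ℝ (Fin N) → ℝ :=
      fun y => 1 - ‖y‖ ^ (-((N : ℝ) - 1)) * Real.exp (lam * (‖y‖ - 1))
    let z : EuclideanSpace ℝ (Fin N) → EuclideanSpace ℝ (Fin N) :=
      fun y => -(‖y‖⁻¹ • y)
    let divz : ℝ := ∑ i, fderiv ℝ (fun y => z y i) x (EuclideanSpace.single i 1)
    ContDiffAt ℝ 1 u x ∧ ContDiffAt ℝ 1 z x ∧
    divz = -(((N : ℝ) - 1) / ‖x‖) ∧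
    gradient u x = (-((lam - ((N : ℝ) - 1) / ‖x‖) * (1 - u x)) * ‖x‖⁻¹) • x ∧
    ‖gradient u x‖ = (lam - ((N : ℝ) - 1) / ‖x‖) * (1 - u x) ∧
    0 < ‖gradient u x‖ ∧
    gradient u x = ‖gradient u x‖ • z x ∧
    -divz + ‖gradient u x‖ / (1 - u x) = lam := by
  intro u z divz
  have hlam0 : 0 < lam := (Nat.cast_nonneg N).trans_lt hlam
  have hr : 0 < ‖x‖ := (div_nonneg (Nat.cast_nonneg N) hlam0.le).trans_lt hx1
  have hx0 : x ≠ 0 := norm_pos_iff.1 hr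
  have h1u : 1 - u x = ‖x‖ ^ (-((N : ℝ) - 1)) * exp (lam * (‖x‖ - 1)) := sub_sub_cancel _ _
  have hK : 0 < lam - ((N : ℝ) - 1) / ‖x‖ := by
    rw [sub_pos, div_lt_iff₀ hr]
    nlinarith [(div_lt_iff₀ hlam0).1 hx1]
  have hu : 0 < 1 - u x := by
    rw [h1u]
    positivity
  have hpos : 0 < (lam - ((N : ℝ) - 1) / ‖x‖) * (1 - u x) := mul_pos hK hu
  have hgrad : gradient u x = (-((lam - ((N : ℝ) - 1) / ‖x‖) * (1 - u x)) * ‖x‖⁻¹) • x := by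
    rw [h1u]
    exact (((hasDerivAt_rpow_neg_mul_exp hr.ne').const_sub 1).hasGradientAt_comp_norm hx0).gradient
  have hnorm : ‖gradient u x‖ = (lam - ((N : ℝ) - 1) / ‖x‖) * (1 - u x) := by
    rw [hgrad, norm_smul, norm_mul, norm_neg, Real.norm_of_nonneg hpos.le, norm_inv, norm_norm,
      inv_mul_cancel_right₀ hr.ne']
  have hdiv : divz = -(((N : ℝ) - 1) / ‖x‖) := divergence_neg_inv_norm_smul hx0
  have hnC : ContDiffAt ℝ 1 (fun y : EuclideanSpace ℝ (Fin N) => ‖y‖) x := contDiffAt_norm ℝ hx0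
  refine ⟨?_, ((hnC.inv hr.ne').smul contDiffAt_id).neg, hdiv, hgrad, hnorm, hnorm ▸ hpos, ?_, ?_⟩
  · exact contDiffAt_const.sub ((hnC.rpow_const_of_ne hr.ne').mul
      (contDiffAt_const.mul (hnC.sub contDiffAt_const)).exp)
  · rw [hnorm, hgrad, neg_mul, neg_smul, ← smul_smul, ← smul_neg]
  · rw [hdiv, hnorm, mul_div_cancel_right₀ _ hu.ne']
    ring

/-- On the annulus `N/λ < |x| < 1`, the radial profile `u(y) = 1 - |y|^{-(N-1)} e^{λ(|y|-1)}`
and the vector field `z(y) = -y/|y|` are `C¹` near `x`, and satisfy: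
`div z(x) = -(N-1)/|x|`, `∇u(x) = -(λ - (N-1)/|x|)(1-u(x)) x/|x|`,
`|∇u(x)| = (λ - (N-1)/|x|)(1-u(x)) > 0` with `∇u(x) = |∇u(x)| z(x)`, and
`-div z(x) + |∇u(x)|/(1-u(x)) = λ`. -/
theorem stmt11 (N : ℕ) (hN : 1 ≤ N) (lam : ℝ) (hlam : (N : ℝ) < lam)
    (x : EuclideanSpace ℝ (Fin N)) (hx1 : (N : ℝ) / lam < ‖x‖) (hx2 : ‖x‖ < 1) :
    let u : EuclideanSpace ℝ (Fin N) → ℝ :=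
      fun y => 1 - ‖y‖ ^ (-((N : ℝ) - 1)) * Real.exp (lam * (‖y‖ - 1))
    let z : EuclideanSpace ℝ (Fin N) → EuclideanSpace ℝ (Fin N) :=
      fun y => -(‖y‖⁻¹ • y)
    let divz : ℝ := ∑ i, fderiv ℝ (fun y => z y i) x (EuclideanSpace.single i 1)
    ContDiffAt ℝ 1 u x ∧ ContDiffAt ℝ 1 z x ∧
    divz = -(((N : ℝ) - 1) / ‖x‖) ∧
    gradient u x = (-((lam - ((N : ℝ) - 1) / ‖x‖) * (1 - u x)) * ‖x‖⁻¹) • x ∧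
    ‖gradient u x‖ = (lam - ((N : ℝ) - 1) / ‖x‖) * (1 - u x) ∧
    0 < ‖gradient u x‖ ∧
    gradient u x = ‖gradient u x‖ • z x ∧
    -divz + ‖gradient u x‖ / (1 - u x) = lam :=
  stmt11_general N lam hlam x hx1
end

section
/- Let $N\ge 1$ be an integer and $\lambda>N$ a real number. Define $u:\overline{B_1}\to\mathbb{R}$ by $u(x)=1-(\lambda/N)^{N-1}e^{N-\lambda}$ for $|x|\le N/\lambda$ and $u(x)=1-|x|^{-(N-1)}e^{\lambda(|x|-1)}$ for $N/\lambda<|x|\le 1$. Then: (i) $u$ is continuous on the closed unit ball (in particular the two formulas agree on the sphere $|x|=N/\lambda$); (ii) $u(x)=0$ for $|x|=1$; (iii) $0\le u(x)<1$ for every $|x|\le 1$; (iv) $u(x)>0$ for $|x|<1$, so $u$ is a nonconstant function vanishing on the boundary. -/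
/-!
Write `u x = 1 - g (max (N/λ) ‖x‖)` with the radial profile `g r = r^{-(N-1)} e^{λ(r-1)}`;
at `r = N/λ` this is the constant of the inner formula, which gives continuity. Since
`g 1 = 1` and `log g r = λ(r-1) - (N-1) log r ≤ (1-r)((N-1)/r - λ)` by `log r ≥ 1 - 1/r`,
we get `g r < 1` for `N/λ ≤ r < 1` (there `λ r ≥ N > N-1`), so `0 < u < 1` inside the ball
and `u = 0` on the sphere.
-/

open Metric Real Set

noncomputable def radialProfile (c lam r : ℝ) : ℝ := r ^ (-c) * exp (lam * (r - 1))

section RadialProfile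

variable {c lam r : ℝ}

theorem radialProfile_pos (hr : 0 < r) : 0 < radialProfile c lam r :=
  mul_pos (rpow_pos_of_pos hr _) (exp_pos _)

@[simp]
theorem radialProfile_one : radialProfile c lam 1 = 1 := by
  simp [radialProfile]

theorem radialProfile_eq_exp (hr : 0 < r) :
    radialProfile c lam r = exp (lam * (r - 1) - c * log r) := by
  rw [radialProfile, rpow_def_of_pos hr, ← exp_add]
  ring_nf

theorem radialProfile_lt_one (hc : 0 ≤ c) (hr : 0 < r) (hr1 : r < 1) (hcr : c < lam * r) :
    radialProfile c lam r < 1 := by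
  rw [radialProfile_eq_exp hr, exp_lt_one_iff]
  have hlog : c * (1 - r⁻¹) ≤ c * log r :=
    mul_le_mul_of_nonneg_left (one_sub_inv_le_log_of_pos hr) hc
  have hslope : c * r⁻¹ < lam := by
    rwa [← div_eq_mul_inv, div_lt_iff₀ hr]
  calc lam * (r - 1) - c * log r ≤ lam * (r - 1) - c * (1 - r⁻¹) := by linarith
    _ = (1 - r) * (c * r⁻¹ - lam) := by field_simp; ring
    _ < 0 := mul_neg_of_pos_of_neg (by linarith) (by linarith)

theorem continuousOn_radialProfile : ContinuousOn (radialProfile c lam) (Ioi 0) :=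
  (continuousOn_id.rpow_const fun _ hr => Or.inl (ne_of_gt hr)).mul (by fun_prop)

theorem continuous_radialProfile_max_norm {E : Type*} [SeminormedAddCommGroup E] {a : ℝ}
    (ha : 0 < a) : Continuous fun x : E => radialProfile c lam (max a ‖x‖) :=
  continuousOn_radialProfile.comp_continuous (continuous_const.max continuous_norm)
    fun _ => lt_max_of_lt_left ha

theorem radialProfile_div (N : ℕ) (hN : 1 ≤ N) (hlam : 0 < lam) :
    radialProfile ((N : ℝ) - 1) lam (N / lam) = (lam / N) ^ (N - 1) * exp (N - lam) := by
  have hcast : (N : ℝ) - 1 = ((N - 1 : ℕ) : ℝ) := by rw [Nat.cast_sub hN, Nat.cast_one]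
  have hpow : ((N : ℝ) / lam) ^ (-((N : ℝ) - 1)) = (lam / N) ^ (N - 1) := by
    rw [hcast, rpow_neg (by positivity), rpow_natCast, ← inv_pow, inv_div]
  rw [radialProfile, hpow, mul_sub, mul_div_cancel₀ _ hlam.ne', mul_one]

theorem natCast_sub_one_lt_mul_max {N : ℕ} (hlam : 0 < lam) :
    (N : ℝ) - 1 < lam * max (N / lam) r := by
  have := mul_le_mul_of_nonneg_left (le_max_left ((N : ℝ) / lam) r) hlam.le
  rw [mul_div_cancel₀ _ hlam.ne'] at this
  linarith

theorem radialProfile_max_lt_one {N : ℕ} (hN : 1 ≤ N) (hlam : (N : ℝ) < lam) (hr : r < 1) :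
    radialProfile ((N : ℝ) - 1) lam (max (N / lam) r) < 1 := by
  have hlam0 : 0 < lam := (Nat.cast_nonneg N).trans_lt hlam
  exact radialProfile_lt_one (sub_nonneg.2 (by exact_mod_cast hN))
    (lt_max_of_lt_left (div_pos (by exact_mod_cast hN) hlam0))
    (max_lt ((div_lt_one hlam0).2 hlam) hr) (natCast_sub_one_lt_mul_max hlam0)

theorem radialProfile_max_le_one {N : ℕ} (hN : 1 ≤ N) (hlam : (N : ℝ) < lam) (hr : r ≤ 1) :
    radialProfile ((N : ℝ) - 1) lam (max (N / lam) r) ≤ 1 := by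
  rcases hr.lt_or_eq with hr | rfl
  · exact (radialProfile_max_lt_one hN hlam hr).le
  · rw [max_eq_right ((div_lt_one ((Nat.cast_nonneg N).trans_lt hlam)).2 hlam).le,
      radialProfile_one]

end RadialProfile

/-- The explicit radial profile `u(x) = 1 - (λ/N)^{N-1} e^{N-λ}` for `|x| ≤ N/λ`,
`u(x) = 1 - |x|^{-(N-1)} e^{λ(|x|-1)}` for `N/λ < |x| ≤ 1` (with `λ > N`): the two formulas
agree on the sphere `|x| = N/λ`, `u` is continuous on the closed unit ball, vanishes on the
boundary sphere, satisfies `0 ≤ u < 1`, is positive inside, and is nonconstant. -/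
theorem stmt13 (N : ℕ) (hN : 1 ≤ N) (lam : ℝ) (hlam : (N : ℝ) < lam) :
    let u : EuclideanSpace ℝ (Fin N) → ℝ := fun x =>
      if ‖x‖ ≤ (N : ℝ) / lam then 1 - (lam / N) ^ (N - 1) * Real.exp ((N : ℝ) - lam)
      else 1 - ‖x‖ ^ (-((N : ℝ) - 1)) * Real.exp (lam * (‖x‖ - 1))
    (∀ x : EuclideanSpace ℝ (Fin N), ‖x‖ = (N : ℝ) / lam →
        1 - (lam / N) ^ (N - 1) * Real.exp ((N : ℝ) - lam)
          = 1 - ‖x‖ ^ (-((N : ℝ) - 1)) * Real.exp (lam * (‖x‖ - 1))) ∧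
    ContinuousOn u (closedBall 0 1) ∧
    (∀ x : EuclideanSpace ℝ (Fin N), ‖x‖ = 1 → u x = 0) ∧
    (∀ x : EuclideanSpace ℝ (Fin N), ‖x‖ ≤ 1 → 0 ≤ u x ∧ u x < 1) ∧
    (∀ x : EuclideanSpace ℝ (Fin N), ‖x‖ < 1 → 0 < u x) ∧
    ¬ (∀ x ∈ closedBall (0 : EuclideanSpace ℝ (Fin N)) 1,
        ∀ y ∈ closedBall (0 : EuclideanSpace ℝ (Fin N)) 1, u x = u y) := by
  intro u
  have hlam0 : 0 < lam := (Nat.cast_nonneg N).trans_lt hlam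
  have ha : 0 < (N : ℝ) / lam := div_pos (by exact_mod_cast hN) hlam0
  have hprofile := radialProfile_div N hN hlam0
  have hu : ∀ x, u x = 1 - radialProfile ((N : ℝ) - 1) lam (max ((N : ℝ) / lam) ‖x‖) := by
    intro x
    by_cases hx : ‖x‖ ≤ (N : ℝ) / lam
    · simp only [u, if_pos hx, max_eq_left hx, hprofile]
    · simp only [u, if_neg hx, max_eq_right (not_le.1 hx).le, radialProfile]
  have hsphere : ∀ x : EuclideanSpace ℝ (Fin N), ‖x‖ = 1 → u x = 0 := fun x hx => by
    rw [hu, hx, max_eq_right ((div_lt_one hlam0).2 hlam).le, radialProfile_one, sub_self]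
  refine ⟨fun x hx => ?_, ?_, hsphere, fun x hx => ?_, fun x hx => ?_, fun hconst => ?_⟩
  · rw [← hprofile, hx]; rfl
  · exact (continuous_const.sub (continuous_radialProfile_max_norm ha)).continuousOn.congr
      fun x _ => hu x
  · rw [hu, sub_nonneg, sub_lt_self_iff]
    exact ⟨radialProfile_max_le_one hN hlam hx, radialProfile_pos (lt_max_of_lt_left ha)⟩
  · rw [hu, sub_pos]
    exact radialProfile_max_lt_one hN hlam hx
  · have : Nonempty (Fin N) := ⟨⟨0, hN⟩⟩
    obtain ⟨y, hy⟩ := exists_norm_eq (EuclideanSpace ℝ (Fin N)) zero_le_one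
    have h0 := hconst 0 (mem_closedBall_self zero_le_one) y (mem_closedBall_zero_iff.2 hy.le)
    rw [hsphere y hy, hu, sub_eq_zero] at h0
    exact (radialProfile_max_lt_one hN hlam (norm_zero.trans_lt one_pos)).ne' h0
end
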